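/- arXiv:2505.01730 — 2 statements merged into one kernel-verified Lean document; each statement's English description precedes it below -/
import Mathlib

section
/- Soft-reset IF spike count formula: let θ* > 0, let inputs x₁, …, x_T ∈ ℝ be fed to a soft-reset integrate-and-fire neuron with initial potential v₀ = θ*/2, where at each step the potential is incremented by x_t and then, if it is ≥ θ*, a spike is emitted and θ* is subtracted. If the potential never goes negative during the run and the final potential v_T satisfies 0 ≤ v_T < θ*, then the total spike count s satisfies s = ⌊(Σ_t x_t)/θ* + 1/2⌋. -/
theorem eq_add_sum_Icc_of_forall_eq_add {M : Type*} [AddCommMonoid M] (v d : ℕ → M)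
    (T : ℕ) (h : ∀ t, 1 ≤ t → t ≤ T → v t = v (t - 1) + d t) :
    ∀ n ≤ T, v n = v 0 + ∑ t ∈ Finset.Icc 1 n, d t := by
  intro n hn
  induction n with
  | zero => simp
  | succ k ih =>
    rw [Finset.sum_Icc_succ_top (by omega), ← add_assoc, ← ih (by omega),
      h (k + 1) (by omega) hn, Nat.add_sub_cancel]

theorem soft_reset_spike_count (θs : ℝ) (hθs : 0 < θs) (T : ℕ) (x : ℕ → ℝ)
    (v : ℕ → ℝ) (hv0 : v 0 = θs / 2)
    (hdyn : ∀ t, 1 ≤ t → t ≤ T →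
      v t = v (t-1) + x t - θs * (if θs ≤ v (t-1) + x t then 1 else 0))
    (hnonneg : ∀ t ≤ T, 0 ≤ v t) (hfinal : v T < θs)
    (s : ℤ)
    (hs : (s : ℝ) = ∑ t ∈ Finset.Icc 1 T, (if θs ≤ v (t-1) + x t then (1:ℝ) else 0)) :
    s = ⌊(∑ t ∈ Finset.Icc 1 T, x t) / θs + 1/2⌋ := by
  have hvT : v T = θs / 2 + ∑ t ∈ Finset.Icc 1 T, x t - θs * s := by
    rw [eq_add_sum_Icc_of_forall_eq_add v _ T
        (fun t h₁ h₂ => (hdyn t h₁ h₂).trans (add_sub_assoc _ _ _)) T le_rfl,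
      hv0, Finset.sum_sub_distrib, ← Finset.mul_sum, hs, add_sub_assoc]
  have hsum : (∑ t ∈ Finset.Icc 1 T, x t) / θs + 1 / 2 = s + v T / θs := by
    rw [hvT]
    field_simp
    ring
  have hresidue : ⌊v T / θs⌋ = 0 :=
    Int.floor_eq_zero_iff.mpr
      ⟨div_nonneg (hnonneg T le_rfl) hθs.le, (div_lt_one hθs).mpr hfinal⟩
  rw [hsum, Int.floor_intCast_add, hresidue, add_zero]
end

section
/- Precise IF-layer equivalence (Theorem on IF operation): let θ > 0, L_{n−1}, L_n positive integers, and x₁, …, x_{L_{n−1}} ∈ ℝ with Σᵢ xᵢ = x. Run Algorithm PASC: (stage 1) soft-reset IF with threshold θ/L_n and initial potential θ/(2L_n) on inputs xᵢ, counting spikes; (stage 2) for max(L_{n−1}, L_n) − 1 more timesteps without input, emit excitatory spikes when v ≥ θ/L_n and inhibitory spikes when v < 0, updating the signed spike count s; (stage 3) from initial potential s·θ/L_n, run L_n timesteps of thresholded subtraction emitting output spikes. Then the sum of the L_n output spike values (each ∈ {0, θ/L_n}) equals the QCFS activation ĥ(x) = θ·clip((1/L_n)·⌊x·L_n/θ +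 1/2⌋, 0, 1). -/
/-- Stage-1 soft-reset IF step: integrate input `xi`; if the potential reaches the
threshold, emit an excitatory spike (increment count) and soft reset. -/
noncomputable def pascStage1Step (θs : ℝ) (p : ℝ × ℤ) (xi : ℝ) : ℝ × ℤ :=
  if θs ≤ p.1 + xi then (p.1 + xi - θs, p.2 + 1) else (p.1 + xi, p.2)

/-- Stage-2 step without input: excitatory spike if `v ≥ θs`, inhibitory spike if `v < 0`. -/
noncomputable def pascStage2Step (θs : ℝ) (p : ℝ × ℤ) : ℝ × ℤ :=
  if θs ≤ p.1 then (p.1 - θs, p.2 + 1)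
  else if p.1 < 0 then (p.1 + θs, p.2 - 1)
  else p

/-- Stage-3 membrane potential: thresholded subtraction from initial value `init`. -/
noncomputable def pascStage3V (θs : ℝ) (init : ℝ) : ℕ → ℝ
  | 0 => init
  | t + 1 => pascStage3V θs init t - (if θs ≤ pascStage3V θs init t then θs else 0)

noncomputable def qcfs (θ : ℝ) (L : ℕ) (x : ℝ) : ℝ :=
  θ * min (max ((1 / (L : ℝ)) * (⌊x * L / θ + 1/2⌋ : ℤ)) 0) 1


/-!
Every PASC stage only moves charge between the membrane potential `v` and the signed spike
count `s`, conserving `v + s·θ*`. After stage 1 this total is `θ*/2 + x`, so `⌊v/θ*⌋ + s` equals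
`n = ⌊x·L_n/θ + 1/2⌋` from then on. Stage 2 fires as long as `v ∉ [0, θ*)`. If it ends with
`v ∈ [0, θ*)` then `s = n`; otherwise every stage-2 spike had the same sign, and since the last
input step did not fire (for `v < 0`) or did fire (for `v ≥ θ*`), the `max(L_{n-1}, L_n) - 1`
stage-2 steps push `s` to `≤ 0`, resp. `≥ L_n`, where `n` lies as well. Stage 3 emits exactly
`clip(s, 0, L_n)` spikes of size `θ*`, which is QCFS.
-/

variable {θs : ℝ}

theorem pascStage1Step_conserve (p : ℝ × ℤ) (a : ℝ) :
    (pascStage1Step θs p a).1 + (pascStage1Step θs p a).2 * θs = p.1 + p.2 * θs + a := by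
  unfold pascStage1Step
  split_ifs <;> push_cast <;> ring

theorem foldl_pascStage1Step_conserve (l : List ℝ) (p : ℝ × ℤ) :
    (l.foldl (pascStage1Step θs) p).1 + (l.foldl (pascStage1Step θs) p).2 * θs
      = p.1 + p.2 * θs + l.sum := by
  induction l generalizing p with
  | nil => simp
  | cons a l ih => rw [List.foldl_cons, ih, pascStage1Step_conserve, List.sum_cons]; ring

theorem pascStage1Step_snd_eq_or_eq_add_one (p : ℝ × ℤ) (a : ℝ) :
    (pascStage1Step θs p a).2 = p.2 ∨ (pascStage1Step θs p a).2 = p.2 + 1 := by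
  unfold pascStage1Step
  split_ifs
  exacts [Or.inr rfl, Or.inl rfl]

theorem foldl_pascStage1Step_snd_mem_Icc (l : List ℝ) (p : ℝ × ℤ) :
    (l.foldl (pascStage1Step θs) p).2 ∈ Set.Icc p.2 (p.2 + l.length) := by
  induction l generalizing p with
  | nil => simp
  | cons a l ih =>
    have := ih (pascStage1Step θs p a)
    rcases pascStage1Step_snd_eq_or_eq_add_one (θs := θs) p a with h | h <;>
    · rw [h] at this
      simp only [List.foldl_cons, List.length_cons, Set.mem_Icc] at this ⊢
      push_cast
      omega

theorem pascStage1Step_snd_of_neg {p : ℝ × ℤ} {a : ℝ} (h : (pascStage1Step θs p a).1 < 0) :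
    (pascStage1Step θs p a).2 = p.2 := by
  unfold pascStage1Step at h ⊢
  split_ifs at h ⊢ with hspike
  · linarith
  · rfl

theorem pascStage1Step_snd_of_le {p : ℝ × ℤ} {a : ℝ} (h : θs ≤ (pascStage1Step θs p a).1) :
    (pascStage1Step θs p a).2 = p.2 + 1 := by
  unfold pascStage1Step at h ⊢
  split_ifs at h ⊢ with hspike
  · rfl
  · linarith

theorem foldl_pascStage1Step_snd_of_neg {l : List ℝ} (hl : l ≠ []) (p : ℝ × ℤ)
    (h : (l.foldl (pascStage1Step θs) p).1 < 0) :
    (l.foldl (pascStage1Step θs) p).2 + 1 ≤ p.2 + l.length := by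
  obtain ⟨l, a, rfl⟩ := (List.eq_nil_or_concat' l).resolve_left hl
  rw [List.foldl_concat] at h ⊢
  have := (foldl_pascStage1Step_snd_mem_Icc (θs := θs) l p).2
  rw [pascStage1Step_snd_of_neg h, List.length_append, List.length_singleton]
  push_cast
  omega

theorem foldl_pascStage1Step_snd_of_le {l : List ℝ} (hl : l ≠ []) (p : ℝ × ℤ)
    (h : θs ≤ (l.foldl (pascStage1Step θs) p).1) :
    p.2 + 1 ≤ (l.foldl (pascStage1Step θs) p).2 := by
  obtain ⟨l, a, rfl⟩ := (List.eq_nil_or_concat' l).resolve_left hl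
  rw [List.foldl_concat] at h ⊢
  have := (foldl_pascStage1Step_snd_mem_Icc (θs := θs) l p).1
  rw [pascStage1Step_snd_of_le h]
  omega

theorem pascStage2Step_conserve (p : ℝ × ℤ) :
    (pascStage2Step θs p).1 + (pascStage2Step θs p).2 * θs = p.1 + p.2 * θs := by
  unfold pascStage2Step
  split_ifs <;> push_cast <;> ring

theorem iterate_pascStage2Step_conserve (k : ℕ) (p : ℝ × ℤ) :
    ((pascStage2Step θs)^[k] p).1 + ((pascStage2Step θs)^[k] p).2 * θs = p.1 + p.2 * θs := by
  induction k generalizing p with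
  | zero => rfl
  | succ k ih => rw [Function.iterate_succ_apply, ih, pascStage2Step_conserve]

theorem pascStage2Step_of_le {p : ℝ × ℤ} (h : θs ≤ p.1) :
    pascStage2Step θs p = (p.1 - θs, p.2 + 1) :=
  if_pos h

theorem pascStage2Step_of_neg (hθs : 0 < θs) {p : ℝ × ℤ} (h : p.1 < 0) :
    pascStage2Step θs p = (p.1 + θs, p.2 - 1) := by
  rw [pascStage2Step, if_neg (by linarith), if_pos h]

theorem pascStage2Step_of_mem_Ico {p : ℝ × ℤ} (h : p.1 ∈ Set.Ico 0 θs) :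
    pascStage2Step θs p = p := by
  rw [pascStage2Step, if_neg (not_le.2 h.2), if_neg (not_lt.2 h.1)]

theorem iterate_pascStage2Step_cases (hθs : 0 < θs) (k : ℕ) (p : ℝ × ℤ) :
    ((pascStage2Step θs)^[k] p).1 ∈ Set.Ico 0 θs ∨
      (((pascStage2Step θs)^[k] p).1 < 0 ∧ p.1 < 0 ∧
        ((pascStage2Step θs)^[k] p).2 = p.2 - k) ∨
      (θs ≤ ((pascStage2Step θs)^[k] p).1 ∧ θs ≤ p.1 ∧
        ((pascStage2Step θs)^[k] p).2 = p.2 + k) := by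
  induction k with
  | zero =>
    simp only [Function.iterate_zero, id_eq, Nat.cast_zero, sub_zero, add_zero, and_true,
      and_self, Set.mem_Ico]
    rcases lt_or_ge p.1 0 with hneg | hnonneg
    · exact Or.inr (Or.inl hneg)
    rcases lt_or_ge p.1 θs with hlt | hle
    · exact Or.inl ⟨hnonneg, hlt⟩
    · exact Or.inr (Or.inr hle)
  | succ k ih =>
    rw [Function.iterate_succ_apply']
    set q := (pascStage2Step θs)^[k] p
    rcases ih with hq | ⟨hq, hp, hs⟩ | ⟨hq, hp, hs⟩
    · exact Or.inl (by rwa [pascStage2Step_of_mem_Ico hq])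
    · rw [pascStage2Step_of_neg hθs hq]
      rcases lt_or_ge (q.1 + θs) 0 with hneg | hnonneg
      · exact Or.inr (Or.inl ⟨hneg, hp, by rw [hs]; push_cast; ring⟩)
      · exact Or.inl ⟨hnonneg, by linarith⟩
    · rw [pascStage2Step_of_le hq]
      rcases lt_or_ge (q.1 - θs) θs with hlt | hle
      · exact Or.inl ⟨by linarith, hlt⟩
      · exact Or.inr (Or.inr ⟨hle, hp, by rw [hs]; push_cast; ring⟩)

theorem pascStage3V_intCast_mul (hθs : 0 < θs) (s : ℤ) (t : ℕ) :
    pascStage3V θs (s * θs) t = ((s - min (t : ℤ) (max s 0) : ℤ) : ℝ) * θs := by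
  induction t with
  | zero => simp [pascStage3V]
  | succ t ih =>
    rw [pascStage3V, ih]
    split_ifs with hspike <;> rw [le_mul_iff_one_le_left hθs] at hspike
    · have hspike : (1 : ℤ) ≤ s - min (t : ℤ) (max s 0) := by exact_mod_cast hspike
      rw [show s - min ((t + 1 : ℕ) : ℤ) (max s 0) = s - min (t : ℤ) (max s 0) - 1 by omega]
      push_cast
      ring
    · have hspike : ¬ (1 : ℤ) ≤ s - min (t : ℤ) (max s 0) := by exact_mod_cast hspike
      rw [show s - min ((t + 1 : ℕ) : ℤ) (max s 0) = s - min (t : ℤ) (max s 0) by omega, sub_zero]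

theorem le_pascStage3V_intCast_mul_iff (hθs : 0 < θs) (s : ℤ) (t : ℕ) :
    θs ≤ pascStage3V θs (s * θs) t ↔ (t : ℤ) < s := by
  rw [pascStage3V_intCast_mul hθs, le_mul_iff_one_le_left hθs]
  norm_cast
  omega

theorem sum_range_pascStage3_spikes (hθs : 0 < θs) (s : ℤ) (N : ℕ) :
    ∑ t ∈ Finset.range N, (if θs ≤ pascStage3V θs (s * θs) t then θs else 0)
      = ((min (max s 0) N : ℤ) : ℝ) * θs := by
  induction N with
  | zero => simp
  | succ N ih =>
    rw [Finset.sum_range_succ, ih]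
    split_ifs with hspike <;> rw [le_pascStage3V_intCast_mul_iff hθs] at hspike
    · rw [show min (max s 0) ((N + 1 : ℕ) : ℤ) = min (max s 0) N + 1 by omega]
      push_cast
      ring
    · rw [show min (max s 0) ((N + 1 : ℕ) : ℤ) = min (max s 0) N by omega, add_zero]

theorem qcfs_eq_clamp_mul (θ : ℝ) {L : ℕ} (hL : 0 < L) (x : ℝ) :
    qcfs θ L x = ((min (max ⌊x * L / θ + 1 / 2⌋ 0) L : ℤ) : ℝ) * (θ / L) := by
  have hL' : (0 : ℝ) < L := Nat.cast_pos.2 hL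
  have hclip : ∀ n : ℤ, min (max ((1 / (L : ℝ)) * n) 0) 1 = ((min (max n 0) L : ℤ) : ℝ) / L := by
    intro n
    calc min (max ((1 / (L : ℝ)) * n) 0) 1 = min (max ((n : ℝ) / L) (0 / L)) (L / L) := by
          rw [zero_div, div_self hL'.ne', one_div_mul_eq_div]
      _ = _ := by rw [max_div_div_right hL'.le, min_div_div_right hL'.le]; push_cast; rfl
  rw [qcfs, hclip]
  ring

theorem foldl_iterate_pascStage2Step_snd_clamp (hθs : 0 < θs) (v₀ : ℝ) {l : List ℝ}
    (hl : l ≠ []) {k N : ℕ} (hlk : l.length ≤ k + 1) (hNk : N ≤ k + 1) :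
    min (max ((pascStage2Step θs)^[k] (l.foldl (pascStage1Step θs) (v₀, 0))).2 0) N
      = min (max ⌊(v₀ + l.sum) / θs⌋ 0) N := by
  have hc := iterate_pascStage2Step_conserve (θs := θs) k (l.foldl (pascStage1Step θs) (v₀, 0))
  have hcases := iterate_pascStage2Step_cases hθs k (l.foldl (pascStage1Step θs) (v₀, 0))
  have hneg := foldl_pascStage1Step_snd_of_neg (θs := θs) hl (v₀, 0)
  have hle := foldl_pascStage1Step_snd_of_le (θs := θs) hl (v₀, 0)
  rw [foldl_pascStage1Step_conserve] at hc
  generalize l.foldl (pascStage1Step θs) (v₀, 0) = p at hc hcases hneg hle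
  generalize (pascStage2Step θs)^[k] p = q at hc hcases ⊢
  simp only [Int.cast_zero, zero_mul, add_zero] at hc hneg hle
  have hfloor : ⌊(v₀ + l.sum) / θs⌋ = ⌊q.1 / θs⌋ + q.2 := by
    rw [← hc, add_div, mul_div_cancel_right₀ _ hθs.ne', Int.floor_add_intCast]
  rw [hfloor]
  rcases hcases with hq | ⟨hq, hp, hs⟩ | ⟨hq, hp, hs⟩
  · have : ⌊q.1 / θs⌋ = 0 :=
      Int.floor_eq_zero_iff.2 ⟨div_nonneg hq.1 hθs.le, (div_lt_one hθs).2 hq.2⟩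
    rw [this, zero_add]
  · have hfl : ⌊q.1 / θs⌋ < 0 := Int.floor_lt.2 (by push_cast; exact div_neg_of_neg_of_pos hq hθs)
    have := hneg hp
    omega
  · have hfl : 1 ≤ ⌊q.1 / θs⌋ := Int.le_floor.2 (by push_cast; exact (one_le_div hθs).2 hq)
    have := hle hp
    omega

theorem pasc_if_layer_equivalence (θ : ℝ) (hθ : 0 < θ)
    (Lm Ln : ℕ) (hLm : 0 < Lm) (hLn : 0 < Ln)
    (x : Fin Lm → ℝ) (X : ℝ) (hX : ∑ i, x i = X) :
    (∑ t ∈ Finset.range Ln,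
        (if θ / Ln ≤ pascStage3V (θ / Ln)
            ((((pascStage2Step (θ / Ln))^[max Lm Ln - 1]
                ((List.ofFn x).foldl (pascStage1Step (θ / Ln)) (θ / Ln / 2, 0))).2 : ℝ)
              * (θ / Ln)) t
          then θ / Ln else 0))
      = qcfs θ Ln X := by
  have hLn' : (0 : ℝ) < Ln := Nat.cast_pos.2 hLn
  have hθs : 0 < θ / Ln := div_pos hθ hLn'
  have hl : List.ofFn x ≠ [] := by simpa [List.ofFn_eq_nil_iff] using hLm.ne'
  rw [sum_range_pascStage3_spikes hθs,
    foldl_iterate_pascStage2Step_snd_clamp hθs _ hl (by simp; omega) (by omega),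
    qcfs_eq_clamp_mul θ hLn, List.sum_ofFn, hX]
  congr 5
  field_simp
  ring
end
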